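/- arXiv:2601.01421 — 2 statements merged into one kernel-verified Lean document; each statement's English description precedes it below -/
import Mathlib

section
/- Let c be a choice function on a finite nonempty set X with |X| ≥ 2. Then c is strongly harmful (i.e., sp(c) = |X|−1) if and only if c is inconsistent, i.e., for all distinct x, y ∈ X there is a reversal (A, B) of c with c(A) = x and c(B) = y. -/
/-!
Let `rank r a` be the number of elements above `a` in `r`. The distortion of index `rank r x`
moves exactly the elements above `x` to the bottom, so it makes `x` the maximum of every menu
containing it; hence index `card X - 1` always suffices. If some `s` is never chosen from a menu
containing `x`, put `s` last and `x` second to last: the menus choosing `s` avoid `x`, so index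
`card X - 2` already rationalizes them, and every other choice has rank at most `card X - 2`.
Conversely, if `c` is inconsistent, then for every order the last element `s` is chosen in some
menu containing the second-to-last element `x`, and `s` beats `x` only in the distortion of
index `card X - 1`.
-/

variable {X : Type*}

/-- A strict linear order: asymmetric, transitive, complete. -/
def IsSLO (r : X → X → Prop) : Prop :=
  (∀ a b : X, r a b → ¬ r b a) ∧ (∀ a b d : X, r a b → r b d → r a d) ∧
    (∀ a b : X, a ≠ b → r a b ∨ r b a)

/-- The set of the top `i` elements of `X` with respect to `r`
(those with fewer than `i` elements strictly above them). -/
def topSet (r : X → X → Prop) (i : ℕ) : Set X := {a | Set.ncard {b | r b a} < i}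

/-- The `i`-th harmful distortion of `r`: the top `i` elements are moved,
in reverse order, below all the other elements. -/
def harmful (r : X → X → Prop) (i : ℕ) : X → X → Prop := fun a b =>
  (b ∈ topSet r i ∧ (a ∈ topSet r i → r b a)) ∨
    (a ∉ topSet r i ∧ b ∉ topSet r i ∧ r a b)

/-- A choice function selects an element from every nonempty menu. -/
def IsChoice (c : Finset X → X) : Prop := ∀ A : Finset X, A.Nonempty → c A ∈ A

/-- `x` is the `r`-maximum of the menu `A`. -/
def IsMaxOf (r : X → X → Prop) (A : Finset X) (x : X) : Prop :=
  x ∈ A ∧ ∀ y ∈ A, y ≠ x → r x y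

/-- A reversal (violation of WARP) of `c`. -/
def IsReversal [DecidableEq X] (c : Finset X → X) (A B : Finset X) : Prop :=
  A.Nonempty ∧ B.Nonempty ∧ A ≠ B ∧ c A ≠ c B ∧ c A ∈ A ∩ B ∧ c B ∈ A ∩ B

/-- `I` is (the index set of) a rationalization by self-punishment of `c` by `r`. -/
def RSP [Fintype X] (c : Finset X → X) (r : X → X → Prop) (I : Finset ℕ) : Prop :=
  I.Nonempty ∧ (∀ i ∈ I, i ≤ Fintype.card X - 1) ∧
    ∀ A : Finset X, A.Nonempty → ∃ i ∈ I, IsMaxOf (harmful r i) A (c A)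

/-- The degree of self-punishment of `c`: the minimum over all strict linear orders `r`
and all rationalizations by self-punishment of `c` by `r` of the maximal index used. -/
noncomputable def sp [Fintype X] (c : Finset X → X) : ℕ :=
  sInf { m : ℕ | ∃ r : X → X → Prop, IsSLO r ∧ ∃ I : Finset ℕ,
    RSP c r I ∧ m ∈ I ∧ ∀ i ∈ I, i ≤ m }

/-- `c` is inconsistent: every ordered pair of distinct items is selected in some reversal. -/
def Inconsistent [DecidableEq X] (c : Finset X → X) : Prop :=
  ∀ x y : X, x ≠ y → ∃ A B : Finset X, IsReversal c A B ∧ c A = x ∧ c B = y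

/-- The revealed preference `▷^{c,x}`. -/
def cxPref (c : Finset X → X) (x : X) : X → X → Prop := fun y z =>
  (y = x ∧ z ≠ x) ∨
    (y ≠ x ∧ z ≠ x ∧ y ≠ z ∧ ∃ A : Finset X, x ∉ A ∧ z ∈ A ∧ c A = y)

/-- `c` violates WARP under constant nonreciprocal selection of `j` items. -/
def ViolatesCNS [Fintype X] [DecidableEq X] (c : Finset X → X) (j : ℕ) : Prop :=
  (∀ D : Finset X, D.card < j → ∃ A B : Finset X, IsReversal c A B ∧ c A ∉ D ∧ c B ∉ D) ∧
    ∃ xs : Finset X, xs.card = j ∧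
      (∀ A B : Finset X, IsReversal c A B → c A ∈ xs ∨ c B ∈ xs) ∧
      (∀ x ∈ xs, ∃ A B : Finset X, ∃ y : X, IsReversal c A B ∧ y ∉ xs ∧
        ((c A = x ∧ c B = y) ∨ (c A = y ∧ c B = x)))

/-- The relation `▷^c` built from the witnesses `x 1, …, x j`. -/
def witnessPref (c : Finset X → X) (x : ℕ → X) (j : ℕ) : X → X → Prop := fun y z =>
  (∃ g h : ℕ, 1 ≤ g ∧ g < h ∧ h ≤ j ∧ y = x g ∧ z = x h) ∨
    ((∀ g : ℕ, 1 ≤ g → g ≤ j → y ≠ x g) ∧ (∀ g : ℕ, 1 ≤ g → g ≤ j → z ≠ x g) ∧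
      ∃ A : Finset X, z ∈ A ∧ c A = y) ∨
    ((∃ g : ℕ, 1 ≤ g ∧ g ≤ j ∧ y = x g) ∧ (∀ g : ℕ, 1 ≤ g → g ≤ j → z ≠ x g))

noncomputable def rank (r : X → X → Prop) (a : X) : ℕ := Set.ncard {b | r b a}

lemma mem_topSet_iff {r : X → X → Prop} {i : ℕ} {a : X} : a ∈ topSet r i ↔ rank r a < i :=
  Iff.rfl

def RevealedPreferred (c : Finset X → X) (x y : X) : Prop := ∃ A : Finset X, c A = x ∧ y ∈ A

def IsSPDegree [Fintype X] (c : Finset X → X) (m : ℕ) : Prop :=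
  ∃ r : X → X → Prop, IsSLO r ∧ ∃ I : Finset ℕ, RSP c r I ∧ m ∈ I ∧ ∀ i ∈ I, i ≤ m

lemma isSLO_of_injective (f : X → ℕ) (hf : Function.Injective f) :
    IsSLO fun a b => f a < f b :=
  ⟨fun _ _ => lt_asymm, fun _ _ _ => lt_trans, fun _ _ hab => lt_or_gt_of_ne (hf.ne hab)⟩

lemma exists_isSLO [Fintype X] : ∃ r : X → X → Prop, IsSLO r :=
  ⟨_, isSLO_of_injective _ (Fin.val_injective.comp (Fintype.equivFin X).injective)⟩

lemma exists_isSLO_bottom_two [Fintype X] {s x : X} (hsx : s ≠ x) :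
    ∃ r : X → X → Prop, IsSLO r ∧ (∀ b, b ≠ s → r b s) ∧ ∀ b, b ≠ s → b ≠ x → r b x := by
  classical
  set n := Fintype.card X
  let e := Fintype.equivFin X
  let key : X → ℕ := fun a => if a = s then n + 1 else if a = x then n else e a
  have key_lt : ∀ a, a ≠ s → a ≠ x → key a < n := fun a has hax => by
    simp only [key, if_neg has, if_neg hax]; exact (e a).is_lt
  have key_inj : Function.Injective key := by
    intro a b hab
    have ha := key_lt a
    have hb := key_lt b
    simp only [key] at hab ha hb
    split_ifs at hab ha hb <;> first | subst_vars; rfl | omega | exact e.injective (Fin.ext hab)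
  have key_s : key s = n + 1 := if_pos rfl
  have key_x : key x = n := (if_neg hsx.symm).trans (if_pos rfl)
  refine ⟨_, isSLO_of_injective key key_inj, fun b hbs => ?_, fun b hbs hbx => ?_⟩
  · show key b < key s
    by_cases hbx : b = x
    · subst hbx; omega
    · have := key_lt b hbs hbx; omega
  · have := key_lt b hbs hbx
    show key b < key x
    omega

lemma card_le_rank_add_two [Fintype X] {r : X → X → Prop} {s a : X}
    (h : ∀ b, b ≠ s → b ≠ a → r b a) : Fintype.card X ≤ rank r a + 2 := by
  have hcover : Set.univ ⊆ {y | r y a} ∪ {s, a} := fun b _ => by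
    by_cases hbs : b = s
    · exact Or.inr (Or.inl hbs)
    by_cases hba : b = a
    · exact Or.inr (Or.inr hba)
    exact Or.inl (h b hbs hba)
  calc Fintype.card X = (Set.univ : Set X).ncard := by
        rw [Set.ncard_univ, Nat.card_eq_fintype_card]
    _ ≤ ({y | r y a} ∪ {s, a}).ncard := Set.ncard_le_ncard hcover
    _ ≤ rank r a + ({s, a} : Set X).ncard := Set.ncard_union_le _ _
    _ ≤ rank r a + 2 := by
        grw [Set.ncard_insert_le, Set.ncard_singleton]

namespace IsSLO

variable {r : X → X → Prop}

lemma irrefl (hr : IsSLO r) (a : X) : ¬ r a a := fun h => hr.1 a a h h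

lemma rank_lt_rank [Finite X] (hr : IsSLO r) {a b : X} (h : r a b) : rank r a < rank r b := by
  have hsub : insert a {y | r y a} ⊆ {y | r y b} := by
    rintro y (rfl | hy)
    exacts [h, hr.2.1 _ _ _ hy h]
  calc rank r a < (insert a {y | r y a}).ncard := by
        rw [Set.ncard_insert_of_notMem (s := {y | r y a}) (hr.irrefl a)]; exact Nat.lt_succ_self _
    _ ≤ rank r b := Set.ncard_le_ncard hsub

lemma rank_le_card_sub_one [Fintype X] (hr : IsSLO r) (a : X) :
    rank r a ≤ Fintype.card X - 1 := by
  have := Set.ncard_le_ncard (Set.subset_univ (insert a {y | r y a}))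
  rw [Set.ncard_insert_of_notMem (s := {y | r y a}) (hr.irrefl a), Set.ncard_univ,
    Nat.card_eq_fintype_card] at this
  exact Nat.le_sub_one_of_lt this

lemma exists_forall_rel_min [Finite X] (hr : IsSLO r) {A : Finset X} (hA : A.Nonempty) :
    ∃ s ∈ A, ∀ b ∈ A, b ≠ s → r b s := by
  obtain ⟨s, hs, hmax⟩ := A.exists_max_image (rank r) hA
  refine ⟨s, hs, fun b hb hbs => (hr.2.2 b s hbs).resolve_right fun hsb => ?_⟩
  exact (hmax b hb).not_gt (hr.rank_lt_rank hsb)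

lemma isMaxOf_harmful_rank [Finite X] (hr : IsSLO r) {A : Finset X} {x : X} (hx : x ∈ A) :
    IsMaxOf (harmful r (rank r x)) A x := by
  have hxt : x ∉ topSet r (rank r x) := (lt_irrefl _ <| mem_topSet_iff.1 ·)
  refine ⟨hx, fun y _ hyx => ?_⟩
  by_cases hyt : y ∈ topSet r (rank r x)
  · exact Or.inl ⟨hyt, fun h => absurd h hxt⟩
  · refine Or.inr ⟨hxt, hyt, (hr.2.2 x y hyx.symm).resolve_right fun hyx' => ?_⟩
    exact hyt (hr.rank_lt_rank hyx')

lemma not_harmful_of_rel (hr : IsSLO r) {a b : X} (hba : r b a) {i : ℕ} (hi : i ≤ rank r b) :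
    ¬ harmful r i a b := by
  rintro (⟨hb, -⟩ | ⟨-, -, hab⟩)
  · exact (mem_topSet_iff.1 hb).not_ge hi
  · exact hr.1 _ _ hab hba

end IsSLO

lemma inconsistent_iff_forall_revealedPreferred [DecidableEq X] {c : Finset X → X}
    (hc : IsChoice c) : Inconsistent c ↔ ∀ x y, x ≠ y → RevealedPreferred c x y := by
  constructor
  · intro h x y hxy
    obtain ⟨A, B, ⟨-, -, -, -, -, hB⟩, hcA, hcB⟩ := h x y hxy
    exact ⟨A, hcA, hcB ▸ (Finset.mem_inter.1 hB).1⟩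
  · intro h x y hxy
    obtain ⟨A, hcA, hyA⟩ := h x y hxy
    obtain ⟨B, hcB, hxB⟩ := h y x hxy.symm
    have hA : A.Nonempty := ⟨y, hyA⟩
    have hB : B.Nonempty := ⟨x, hxB⟩
    refine ⟨A, B, ⟨hA, hB, ?_, hcA ▸ hcB ▸ hxy, ?_, ?_⟩, hcA, hcB⟩
    · rintro rfl
      exact hxy (hcA.symm.trans hcB)
    · exact Finset.mem_inter.2 ⟨hc A hA, hcA ▸ hxB⟩
    · exact Finset.mem_inter.2 ⟨hcB ▸ hyA, hc B hB⟩

section SelfPunishment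

variable [Fintype X] {c : Finset X → X}

lemma isSPDegree_of_forall {r : X → X → Prop} (hr : IsSLO r) {m : ℕ}
    (hm : m ≤ Fintype.card X - 1)
    (h : ∀ A : Finset X, A.Nonempty → ∃ i ≤ m, IsMaxOf (harmful r i) A (c A)) :
    IsSPDegree c m := by
  refine ⟨r, hr, Finset.range (m + 1),
    ⟨Finset.nonempty_range_add_one, fun i hi => ?_, fun A hA => ?_⟩,
    Finset.self_mem_range_succ m, fun i hi => Nat.lt_succ_iff.1 (Finset.mem_range.1 hi)⟩
  · exact (Nat.lt_succ_iff.1 (Finset.mem_range.1 hi)).trans hm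
  · obtain ⟨i, hi, hmax⟩ := h A hA
    exact ⟨i, Finset.mem_range.2 (Nat.lt_succ_of_le hi), hmax⟩

lemma IsChoice.isSPDegree_card_sub_one (hc : IsChoice c) : IsSPDegree c (Fintype.card X - 1) := by
  obtain ⟨r, hr⟩ := exists_isSLO (X := X)
  exact isSPDegree_of_forall hr le_rfl fun A hA =>
    ⟨rank r (c A), hr.rank_le_card_sub_one _, hr.isMaxOf_harmful_rank (hc A hA)⟩

lemma IsChoice.isSPDegree_card_sub_two (hc : IsChoice c) {s x : X} (hsx : s ≠ x)
    (h : ¬ RevealedPreferred c s x) : IsSPDegree c (Fintype.card X - 2) := by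
  obtain ⟨r, hr, hs, hx⟩ := exists_isSLO_bottom_two hsx
  have rank_xs := hr.rank_lt_rank (hs x hsx.symm)
  have rank_s := hr.rank_le_card_sub_one s
  have card_le := card_le_rank_add_two hx
  refine isSPDegree_of_forall hr (by omega) fun A hA => ?_
  by_cases hcA : c A = s
  · refine ⟨_, le_rfl, hc A hA, fun y hy hys => Or.inl ⟨?_, fun hsTop => ?_⟩⟩
    · have hyx : y ≠ x := by rintro rfl; exact h ⟨A, hcA, hy⟩
      have := hr.rank_lt_rank (hx y (hcA ▸ hys) hyx)
      exact mem_topSet_iff.2 (by omega)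
    · have := mem_topSet_iff.1 hsTop
      rw [hcA] at this
      omega
  · have := hr.rank_lt_rank (hs (c A) hcA)
    exact ⟨rank r (c A), by omega, hr.isMaxOf_harmful_rank (hc A hA)⟩

lemma card_sub_one_le_of_isSPDegree (hrev : ∀ x y, x ≠ y → RevealedPreferred c x y) {m : ℕ}
    (hm : IsSPDegree c m) : Fintype.card X - 1 ≤ m := by
  classical
  obtain ⟨r, hr, I, ⟨-, -, hrat⟩, -, hI⟩ := hm
  by_contra! hlt
  have : Nontrivial X := Fintype.one_lt_card_iff_nontrivial.1 (by omega)
  obtain ⟨s, -, hs⟩ := hr.exists_forall_rel_min Finset.univ_nonempty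
  obtain ⟨x, hxmem, hx⟩ := hr.exists_forall_rel_min
    ((Finset.univ_nontrivial_iff.2 this).erase_nonempty (a := s))
  have hxs : x ≠ s := Finset.ne_of_mem_erase hxmem
  have card_le := card_le_rank_add_two fun b hbs hbx =>
    hx b (Finset.mem_erase.2 ⟨hbs, Finset.mem_univ b⟩) hbx
  obtain ⟨A, hcA, hxA⟩ := hrev s x hxs.symm
  obtain ⟨i, hiI, -, hmax⟩ := hrat A ⟨x, hxA⟩
  have := hI i hiI
  refine hr.not_harmful_of_rel (hs x (Finset.mem_univ x) hxs) (i := i) (by omega) ?_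
  exact hcA ▸ hmax x hxA (hcA ▸ hxs)

end SelfPunishment

theorem stmt18 [Fintype X] [DecidableEq X] (c : Finset X → X) (hc : IsChoice c)
    (hcard : 2 ≤ Fintype.card X) :
    sp c = Fintype.card X - 1 ↔ Inconsistent c := by
  rw [inconsistent_iff_forall_revealedPreferred hc]
  constructor
  · intro hsp x y hxy
    by_contra hxy'
    have : sp c ≤ Fintype.card X - 2 := Nat.sInf_le (hc.isSPDegree_card_sub_two hxy hxy')
    omega
  · intro hrev
    exact le_antisymm (Nat.sInf_le hc.isSPDegree_card_sub_one)
      (le_csInf ⟨_, hc.isSPDegree_card_sub_one⟩ fun _ => card_sub_one_le_of_isSPDegree hrev)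
end

section
/- For finite nonempty X, let T(X) denote the number of choice functions on X and let T(X, sh) denote the number of inconsistent choice functions on X. Then the ratio T(X, sh)/T(X) tends to 1 as |X| tends to infinity; that is, for every ε > 0 there is N ∈ ℕ such that for every finite set X with |X| ≥ N, T(X, sh) ≥ (1 − ε) · T(X). -/
variable {X : Type*}

/-!
If `c` is not inconsistent, there are `x ≠ y` such that no reversal `(A, B)` has `c A = x` and
`c B = y`; two menus containing both `x` and `y`, one choosing `x` and one choosing `y`, would form
such a reversal, so one of the two items (say `x`) is never chosen from any of the `2 ^ (n - 2)`
menus containing both. A choice function is an independent choice on every menu, so this happens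
for a fraction at most `(1 - 1/n) ^ 2 ^ (n - 2) ≤ e⁻ⁿ` (for `n ≥ 8`) of all choice functions. A
union bound over the fewer than `n²` pairs leaves a fraction `n² e⁻ⁿ → 0` of choice functions that
are not inconsistent.
-/

open Finset Filter Real

lemma Nat.card_subtype_and_add_card_subtype_and_not {α : Type*} [Finite α] (p q : α → Prop) :
    Nat.card {a // p a ∧ q a} + Nat.card {a // p a ∧ ¬ q a} = Nat.card {a // p a} := by
  classical
  have := Fintype.ofFinite α
  simp only [Nat.card_eq_fintype_card, Fintype.card_subtype, ← filter_filter]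
  exact card_filter_add_card_filter_not _

lemma Nat.sq_le_two_pow_sub_two {n : ℕ} (hn : 8 ≤ n) : n ^ 2 ≤ 2 ^ (n - 2) := by
  induction n, hn using Nat.le_induction with
  | base => norm_num
  | succ n hn ih =>
    calc (n + 1) ^ 2 ≤ 2 * n ^ 2 := by nlinarith
      _ ≤ 2 * 2 ^ (n - 2) := Nat.mul_le_mul_left 2 ih
      _ = 2 ^ (n + 1 - 2) := by rw [show n + 1 - 2 = n - 2 + 1 by omega, pow_succ, mul_comm]

lemma one_sub_inv_pow_two_pow_le_exp_neg_one_pow {n : ℕ} (hn : 8 ≤ n) :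
    (1 - 1 / n : ℝ) ^ 2 ^ (n - 2) ≤ exp (-1) ^ n := by
  have hn1 : (1 : ℝ) ≤ n := by exact_mod_cast le_trans (by norm_num) hn
  have hnonneg : (0 : ℝ) ≤ 1 - 1 / n := sub_nonneg.2 (div_le_one_of_le₀ hn1 (by positivity))
  calc (1 - 1 / n : ℝ) ^ 2 ^ (n - 2) ≤ (1 - 1 / n) ^ (n * n) :=
        pow_le_pow_of_le_one hnonneg (by simp) (sq n ▸ Nat.sq_le_two_pow_sub_two hn)
    _ = ((1 - 1 / n) ^ n) ^ n := pow_mul _ _ _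
    _ ≤ exp (-1) ^ n := by gcongr; exact one_sub_div_pow_le_exp_neg hn1

lemma exists_never_chosen_of_not_inconsistent {Y : Type*} [DecidableEq Y] {c : Finset Y → Y}
    (h : ¬ Inconsistent c) : ∃ x y : Y, x ≠ y ∧ ∀ A : Finset Y, x ∈ A → y ∈ A → c A ≠ x := by
  simp only [Inconsistent, not_forall, not_exists, not_and] at h
  obtain ⟨x, y, hxy, hno⟩ := h
  by_contra! hall
  obtain ⟨A, hxA, hyA, hA⟩ := hall x y hxy
  obtain ⟨B, hyB, hxB, hB⟩ := hall y x hxy.symm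
  have hAB : c A ≠ c B := hA ▸ hB ▸ hxy
  exact hno A B ⟨⟨x, hxA⟩, ⟨y, hyB⟩, fun h => hAB (h ▸ rfl), hAB,
    by simp [hA, hxA, hxB], by simp [hB, hyA, hyB]⟩ hA hB

section Counting

variable {Y : Type*} [Fintype Y] [DecidableEq Y]

-- The empty set is not a menu, so it imposes no constraint.
def choiceRange (A : Finset Y) : Finset Y := if A.Nonempty then A else univ

def choiceRangeAvoiding (x y : Y) (A : Finset Y) : Finset Y :=
  if x ∈ A ∧ y ∈ A then A.erase x else choiceRange A

lemma isChoice_iff_mem_piFinset {c : Finset Y → Y} :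
    IsChoice c ↔ c ∈ Fintype.piFinset choiceRange := by
  simp only [IsChoice, Fintype.mem_piFinset, choiceRange]
  refine forall_congr' fun A => ?_
  split_ifs with hA <;> simp [hA]

lemma card_isChoice : Nat.card {c : Finset Y → Y // IsChoice c} =
    ∏ A : Finset Y, (choiceRange A).card := by
  rw [Nat.card_congr (Equiv.subtypeEquivRight fun _ => isChoice_iff_mem_piFinset),
    Nat.card_eq_fintype_card, Fintype.card_coe, Fintype.card_piFinset]

lemma mem_piFinset_choiceRangeAvoiding {x y : Y} {c : Finset Y → Y} (hc : IsChoice c)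
    (hx : ∀ A : Finset Y, x ∈ A → y ∈ A → c A ≠ x) :
    c ∈ Fintype.piFinset (choiceRangeAvoiding x y) := by
  rw [Fintype.mem_piFinset]
  intro A
  rw [choiceRangeAvoiding]
  split_ifs with hA
  · exact mem_erase.2 ⟨hx A hA.1 hA.2, hc A ⟨x, hA.1⟩⟩
  · exact Fintype.mem_piFinset.1 (isChoice_iff_mem_piFinset.1 hc) A

lemma card_filter_mem_and_mem {x y : Y} (hxy : x ≠ y) :
    #{A : Finset Y | x ∈ A ∧ y ∈ A} = 2 ^ (Fintype.card Y - 2) := by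
  have : ({A : Finset Y | x ∈ A ∧ y ∈ A} : Finset (Finset Y)) = Icc {x, y} univ := by
    ext A
    simp [insert_subset_iff]
  rw [this, card_Icc_finset (subset_univ _), card_univ, card_pair hxy]

lemma card_choiceRangeAvoiding_le {x y : Y} (A : Finset Y) :
    ((choiceRangeAvoiding x y A).card : ℝ) ≤
      (if x ∈ A ∧ y ∈ A then (1 - 1 / Fintype.card Y : ℝ) else 1) *
        (choiceRange A).card := by
  unfold choiceRangeAvoiding
  split_ifs with hA
  · have hcard : (A.card : ℝ) ≤ Fintype.card Y := by exact_mod_cast card_le_univ A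
    have hpos : (0 : ℝ) < Fintype.card Y :=
      hcard.trans_lt' (by exact_mod_cast card_pos.2 ⟨x, hA.1⟩)
    rw [choiceRange, if_pos ⟨x, hA.1⟩, card_erase_of_mem hA.1,
      Nat.cast_sub (card_pos.2 ⟨x, hA.1⟩), sub_mul, one_mul, Nat.cast_one, one_div_mul_eq_div]
    gcongr
    exact div_le_one_of_le₀ hcard hpos.le
  · rw [one_mul]

lemma card_piFinset_choiceRangeAvoiding_le {x y : Y} (hxy : x ≠ y) :
    ((Fintype.piFinset (choiceRangeAvoiding x y)).card : ℝ) ≤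
      (1 - 1 / Fintype.card Y) ^ 2 ^ (Fintype.card Y - 2) *
        Nat.card {c : Finset Y → Y // IsChoice c} := by
  rw [card_isChoice, Fintype.card_piFinset]
  push_cast
  calc ∏ A : Finset Y, ((choiceRangeAvoiding x y A).card : ℝ)
      ≤ ∏ A : Finset Y, (if x ∈ A ∧ y ∈ A then (1 - 1 / Fintype.card Y : ℝ) else 1) *
          ((choiceRange A).card : ℝ) :=
        prod_le_prod (fun _ _ => Nat.cast_nonneg _) fun A _ => card_choiceRangeAvoiding_le A
    _ = _ := by
        rw [prod_mul_distrib, prod_ite, prod_const, prod_const_one, mul_one,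
          card_filter_mem_and_mem hxy]

lemma card_not_inconsistent_le (hn : 8 ≤ Fintype.card Y) :
    (Nat.card {c : Finset Y → Y // IsChoice c ∧ ¬ Inconsistent c} : ℝ) ≤
      Fintype.card Y ^ 2 * exp (-1) ^ Fintype.card Y *
        Nat.card {c : Finset Y → Y // IsChoice c} := by
  classical
  set n := Fintype.card Y
  have hcover : ({c | IsChoice c ∧ ¬ Inconsistent c} : Finset (Finset Y → Y)) ⊆
      (univ : Finset Y).offDiag.biUnion
        fun p => Fintype.piFinset (choiceRangeAvoiding p.1 p.2) := by
    intro c hc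
    obtain ⟨hc, hinc⟩ := (mem_filter.1 hc).2
    obtain ⟨x, y, hxy, hx⟩ := exists_never_chosen_of_not_inconsistent hinc
    exact mem_biUnion.2 ⟨(x, y), by simpa using hxy, mem_piFinset_choiceRangeAvoiding hc hx⟩
  have hpairs : ((univ : Finset Y).offDiag.card : ℝ) ≤ n ^ 2 := by
    rw [offDiag_card, card_univ, ← sq]
    exact_mod_cast Nat.sub_le _ _
  rw [Nat.card_eq_fintype_card, Fintype.card_subtype]
  calc (#{c | IsChoice c ∧ ¬ Inconsistent c} : ℝ)
      ≤ ∑ p ∈ (univ : Finset Y).offDiag,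
          ((Fintype.piFinset (choiceRangeAvoiding p.1 p.2)).card : ℝ) := by
        exact_mod_cast (card_le_card hcover).trans card_biUnion_le
    _ ≤ ∑ _p ∈ (univ : Finset Y).offDiag,
          exp (-1) ^ n * (Nat.card {c : Finset Y → Y // IsChoice c} : ℝ) :=
        sum_le_sum fun p hp => (card_piFinset_choiceRangeAvoiding_le (mem_offDiag.1 hp).2.2).trans
          (mul_le_mul_of_nonneg_right (one_sub_inv_pow_two_pow_le_exp_neg_one_pow hn)
            (Nat.cast_nonneg _))
    _ ≤ n ^ 2 * (exp (-1) ^ n * Nat.card {c : Finset Y → Y // IsChoice c}) := by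
        rw [sum_const, nsmul_eq_mul]
        gcongr
    _ = _ := by ring

end Counting

theorem stmt19 :
    ∀ ε : ℝ, 0 < ε → ∃ N : ℕ, ∀ n : ℕ, N ≤ n →
      (1 - ε) * (Nat.card {c : Finset (Fin n) → Fin n // IsChoice c} : ℝ) ≤
        (Nat.card {c : Finset (Fin n) → Fin n // IsChoice c ∧ Inconsistent c} : ℝ) := by
  intro ε hε
  have hr : |exp (-1)| < 1 := by rw [abs_of_pos (exp_pos _), exp_lt_one_iff]; norm_num
  obtain ⟨N, hN⟩ := eventually_atTop.1
    ((tendsto_pow_const_mul_const_pow_of_abs_lt_one 2 hr).eventually_lt_const hε)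
  refine ⟨max N 8, fun n hn => ?_⟩
  have hsplit := Nat.card_subtype_and_add_card_subtype_and_not
    (fun c : Finset (Fin n) → Fin n => IsChoice c) Inconsistent
  have hT := Nat.cast_nonneg (α := ℝ) (Nat.card {c : Finset (Fin n) → Fin n // IsChoice c})
  have hbad := card_not_inconsistent_le (Y := Fin n) (by simpa using le_of_max_le_right hn)
  rw [Fintype.card_fin] at hbad
  have hfew := hbad.trans (mul_le_mul_of_nonneg_right (hN n (le_of_max_le_left hn)).le hT)
  rw [← hsplit, Nat.cast_add] at hfew ⊢
  linarith
end
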